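/- Let ℜ(𝒜) = 𝔓(𝒜)/𝔍 be the quotient A-coring. There is a functor ℜ(ω): 𝒜 → M^{ℜ(𝒜)} into the category of right ℜ(𝒜)-comodules whose composition with the forgetful functor to Mod-A equals ω; it assigns to each P ∈ 𝒜 the right ℜ(𝒜)-comodule with coaction p ↦ Σ_{α_P} e_{α_P} ⊗_A (e_{α_P}* ⊗_{T_P} p + 𝔍), and it sends each morphism λ of 𝒜 to the ℜ(𝒜)-colinear map ω(λ). -/

import Mathlib

open scoped TensorProduct DirectSum
open MulOpposite

universe u

namespace ICC

noncomputable section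

variable (K : Type u) [CommRing K]

/-! ### Tensor products balanced over arbitrary actions -/

section TOver

variable {M N P R : Type u}
variable [AddCommGroup M] [Module K M] [AddCommGroup N] [Module K N]
variable [AddCommGroup P] [Module K P]

variable (ra : M → R → M) (la : R → N → N)

/-- The submodule of relations defining the tensor product of `M` and `N`
balanced over the (not necessarily unital) "scalars" `R`, acting on the right
of `M` via `ra` and on the left of `N` via `la`. -/
def TRel : Submodule K (M ⊗[K] N) :=
  Submodule.span K {x | ∃ m r n, x = ra m r ⊗ₜ[K] n - m ⊗ₜ[K] la r n}

/-- The balanced tensor product `M ⊗_R N`. -/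
abbrev TOver : Type u :=
  (M ⊗[K] N) ⧸ TRel K ra la

/-- The canonical image of `m ⊗ n` in the balanced tensor product. -/
def TOver.mk (m : M) (n : N) : TOver K ra la :=
  Submodule.Quotient.mk (m ⊗ₜ[K] n)

variable {ra la}

theorem TOver.mk_rel (m : M) (r : R) (n : N) :
    TOver.mk K ra la (ra m r) n = TOver.mk K ra la m (la r n) :=
  (Submodule.Quotient.eq _).2 (Submodule.subset_span ⟨m, r, n, rfl⟩)

@[simp] theorem TOver.mk_add_left (m m' : M) (n : N) :
    TOver.mk K ra la (m + m') n = TOver.mk K ra la m n + TOver.mk K ra la m' n := by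
  simp [TOver.mk, TensorProduct.add_tmul]

@[simp] theorem TOver.mk_add_right (m : M) (n n' : N) :
    TOver.mk K ra la m (n + n') = TOver.mk K ra la m n + TOver.mk K ra la m n' := by
  simp [TOver.mk, TensorProduct.tmul_add]

@[simp] theorem TOver.mk_smul_left (k : K) (m : M) (n : N) :
    TOver.mk K ra la (k • m) n = k • TOver.mk K ra la m n := by
  rw [TOver.mk, ← TensorProduct.smul_tmul', Submodule.Quotient.mk_smul]; rfl

@[simp] theorem TOver.mk_smul_right (k : K) (m : M) (n : N) :
    TOver.mk K ra la m (k • n) = k • TOver.mk K ra la m n := by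
  rw [TOver.mk, TensorProduct.tmul_smul, Submodule.Quotient.mk_smul]; rfl

@[simp] theorem TOver.mk_zero_left (n : N) : TOver.mk K ra la 0 n = 0 := by
  simp [TOver.mk, TensorProduct.zero_tmul]

@[simp] theorem TOver.mk_zero_right (m : M) : TOver.mk K ra la m 0 = 0 := by
  simp [TOver.mk, TensorProduct.tmul_zero]

variable (ra la) in
/-- `TOver.mk` as a bilinear map. -/
def TOver.mkHom : M →ₗ[K] N →ₗ[K] TOver K ra la :=
  LinearMap.mk₂ K (TOver.mk K ra la) (TOver.mk_add_left K) (TOver.mk_smul_left K)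
    (TOver.mk_add_right K) (TOver.mk_smul_right K)

@[simp] theorem TOver.mkHom_apply (m : M) (n : N) :
    TOver.mkHom K ra la m n = TOver.mk K ra la m n := rfl

@[elab_as_elim]
theorem TOver.induction_on {p : TOver K ra la → Prop} (x : TOver K ra la)
    (zero : p 0) (tmul : ∀ m n, p (TOver.mk K ra la m n))
    (add : ∀ x y, p x → p y → p (x + y)) : p x := by
  obtain ⟨y, rfl⟩ := Submodule.Quotient.mk_surjective _ x
  induction y using TensorProduct.induction_on with
  | zero => simpa using zero
  | tmul m n => exact tmul m n
  | add a b ha hb => rw [Submodule.Quotient.mk_add]; exact add _ _ ha hb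

/-- Lift a balanced bilinear map to the balanced tensor product. -/
def TOver.lift (f : M →ₗ[K] N →ₗ[K] P)
    (hf : ∀ m r n, f (ra m r) n = f m (la r n)) :
    TOver K ra la →ₗ[K] P :=
  Submodule.liftQ _ (TensorProduct.lift f) (by
    rw [TRel, Submodule.span_le]
    rintro _ ⟨m, r, n, rfl⟩
    simp only [SetLike.mem_coe, LinearMap.mem_ker, map_sub, TensorProduct.lift.tmul]
    rw [hf m r n, sub_self])

@[simp] theorem TOver.lift_mk (f : M →ₗ[K] N →ₗ[K] P)
    (hf : ∀ m r n, f (ra m r) n = f m (la r n)) (m : M) (n : N) :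
    TOver.lift K f hf (TOver.mk K ra la m n) = f m n := by
  simp [TOver.lift, TOver.mk]

theorem TOver.hom_ext {f g : TOver K ra la →ₗ[K] P}
    (h : ∀ m n, f (TOver.mk K ra la m n) = g (TOver.mk K ra la m n)) : f = g :=
  Submodule.linearMap_qext _ (TensorProduct.ext' h)

variable (ra la) in
/-- Functoriality of balanced tensor products. -/
def TOver.map {M' N' R' : Type u} [AddCommGroup M'] [Module K M']
    [AddCommGroup N'] [Module K N']
    (ra' : M' → R' → M') (la' : R' → N' → N')
    (f : M →ₗ[K] M') (g : N →ₗ[K] N') (ρ : R → R')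
    (hf : ∀ m r, f (ra m r) = ra' (f m) (ρ r))
    (hg : ∀ r n, g (la r n) = la' (ρ r) (g n)) :
    TOver K ra la →ₗ[K] TOver K ra' la' :=
  Submodule.mapQ _ _ (TensorProduct.map f g) (by
    rw [TRel, Submodule.span_le]
    rintro _ ⟨m, r, n, rfl⟩
    simp only [SetLike.mem_coe, Submodule.mem_comap, map_sub, TensorProduct.map_tmul]
    exact Submodule.subset_span ⟨f m, ρ r, g n, by rw [hf, hg]⟩)

variable (ra la) in
@[simp] theorem TOver.map_mk {M' N' R' : Type u} [AddCommGroup M'] [Module K M']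
    [AddCommGroup N'] [Module K N']
    (ra' : M' → R' → M') (la' : R' → N' → N')
    (f : M →ₗ[K] M') (g : N →ₗ[K] N') (ρ : R → R')
    (hf : ∀ m r, f (ra m r) = ra' (f m) (ρ r))
    (hg : ∀ r n, g (la r n) = la' (ρ r) (g n)) (m : M) (n : N) :
    TOver.map K ra la ra' la' f g ρ hf hg (TOver.mk K ra la m n) =
      TOver.mk K ra' la' (f m) (g n) := by
  simp [TOver.map, TOver.mk]

section ModuleStr

variable (B : Type u) [Ring B]

/-- The left action of `b : B` on a balanced tensor product, acting through the
first factor. -/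
def TOver.fstSmul [Module B M] [SMulCommClass B K M]
    (hc : ∀ (b : B) (m : M) (r : R), ra (b • m) r = b • ra m r) (b : B) :
    TOver K ra la →ₗ[K] TOver K ra la :=
  TOver.map K ra la ra la (DistribMulAction.toLinearMap K M b) LinearMap.id id
    (fun m r => (hc b m r).symm) (fun _ _ => rfl)

@[simp] theorem TOver.fstSmul_mk [Module B M] [SMulCommClass B K M]
    (hc : ∀ (b : B) (m : M) (r : R), ra (b • m) r = b • ra m r) (b : B) (m : M) (n : N) :
    TOver.fstSmul K B hc b (TOver.mk K ra la m n) = TOver.mk K ra la (b • m) n := by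
  exact TOver.map_mk K ra la ra la (DistribMulAction.toLinearMap K M b) LinearMap.id id
    (fun m r => (hc b m r).symm) (fun _ _ => rfl) m n

/-- A module structure on the balanced tensor product coming from an action
on the first factor which commutes with the balancing action. -/
def TOver.moduleFst [Module B M] [SMulCommClass B K M]
    (hc : ∀ (b : B) (m : M) (r : R), ra (b • m) r = b • ra m r) :
    Module B (TOver K ra la) where
  smul b x := TOver.fstSmul K B hc b x
  one_smul x := by
    show TOver.fstSmul K B hc 1 x = x
    refine TOver.induction_on K x (map_zero _) (fun m n => ?_) (fun x y hx hy => ?_)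
    · simp
    · rw [map_add, hx, hy]
  mul_smul b b' x := by
    show TOver.fstSmul K B hc (b * b') x =
      TOver.fstSmul K B hc b (TOver.fstSmul K B hc b' x)
    refine TOver.induction_on K x (by simp) (fun m n => ?_) (fun x y hx hy => ?_)
    · simp [mul_smul]
    · rw [map_add, map_add, map_add, hx, hy]
  smul_zero b := map_zero _
  smul_add b x y := map_add _ x y
  add_smul b b' x := by
    show TOver.fstSmul K B hc (b + b') x =
      TOver.fstSmul K B hc b x + TOver.fstSmul K B hc b' x
    refine TOver.induction_on K x (by simp) (fun m n => ?_) (fun x y hx hy => ?_)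
    · simp [add_smul]
    · rw [map_add, map_add, map_add, hx, hy]; abel
  zero_smul x := by
    show TOver.fstSmul K B hc 0 x = 0
    refine TOver.induction_on K x (map_zero _) (fun m n => ?_) (fun x y hx hy => ?_)
    · simp
    · rw [map_add, hx, hy, add_zero]

/-- The action of `b : B` on a balanced tensor product, acting through the
second factor. -/
def TOver.sndSmul [Module B N] [SMulCommClass B K N]
    (hc : ∀ (b : B) (r : R) (n : N), la r (b • n) = b • la r n) (b : B) :
    TOver K ra la →ₗ[K] TOver K ra la :=
  TOver.map K ra la ra la LinearMap.id (DistribMulAction.toLinearMap K N b) id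
    (fun _ _ => rfl) (fun r n => (hc b r n).symm)

@[simp] theorem TOver.sndSmul_mk [Module B N] [SMulCommClass B K N]
    (hc : ∀ (b : B) (r : R) (n : N), la r (b • n) = b • la r n) (b : B) (m : M) (n : N) :
    TOver.sndSmul K B hc b (TOver.mk K ra la m n) = TOver.mk K ra la m (b • n) := by
  exact TOver.map_mk K ra la ra la LinearMap.id (DistribMulAction.toLinearMap K N b) id
    (fun _ _ => rfl) (fun r n => (hc b r n).symm) m n

/-- A module structure on the balanced tensor product coming from an action
on the second factor which commutes with the balancing action. -/
def TOver.moduleSnd [Module B N] [SMulCommClass B K N]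
    (hc : ∀ (b : B) (r : R) (n : N), la r (b • n) = b • la r n) :
    Module B (TOver K ra la) where
  smul b x := TOver.sndSmul K B hc b x
  one_smul x := by
    show TOver.sndSmul K B hc 1 x = x
    refine TOver.induction_on K x (map_zero _) (fun m n => ?_) (fun x y hx hy => ?_)
    · simp
    · rw [map_add, hx, hy]
  mul_smul b b' x := by
    show TOver.sndSmul K B hc (b * b') x =
      TOver.sndSmul K B hc b (TOver.sndSmul K B hc b' x)
    refine TOver.induction_on K x (by simp) (fun m n => ?_) (fun x y hx hy => ?_)
    · simp [mul_smul]
    · rw [map_add, map_add, map_add, hx, hy]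
  smul_zero b := map_zero _
  smul_add b x y := map_add _ x y
  add_smul b b' x := by
    show TOver.sndSmul K B hc (b + b') x =
      TOver.sndSmul K B hc b x + TOver.sndSmul K B hc b' x
    refine TOver.induction_on K x (by simp) (fun m n => ?_) (fun x y hx hy => ?_)
    · simp [add_smul]
    · rw [map_add, map_add, map_add, hx, hy]; abel
  zero_smul x := by
    show TOver.sndSmul K B hc 0 x = 0
    refine TOver.induction_on K x (map_zero _) (fun m n => ?_) (fun x y hx hy => ?_)
    · simp
    · rw [map_add, hx, hy, add_zero]

end ModuleStr

end TOver

/-! ### Tensor products over the base algebra `A` -/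

section TA

variable (A : Type u) [Ring A] [Algebra K A]

/-- Right action of `A` used for balancing. -/
abbrev rA (M : Type u) [SMul Aᵐᵒᵖ M] : M → A → M := fun m a => op a • m

/-- Left action of `A` used for balancing. -/
abbrev lA (N : Type u) [SMul A N] : A → N → N := fun a n => a • n

variable (M N : Type u)
variable [AddCommGroup M] [Module K M] [Module Aᵐᵒᵖ M]
variable [AddCommGroup N] [Module K N] [Module A N]

/-- The tensor product `M ⊗_A N` of a right `A`-module and a left `A`-module. -/
abbrev TA : Type u := TOver K (rA A M) (lA A N)

/-- The class of `m ⊗_A n`. -/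
abbrev TA.mk : M → N → TA K A M N := TOver.mk K (rA A M) (lA A N)

instance TA.instModuleLeft [Module A M] [SMulCommClass A Aᵐᵒᵖ M] [IsScalarTower K A M] :
    Module A (TA K A M N) :=
  TOver.moduleFst K A (fun a m b => by
    haveI := SMulCommClass.symm A Aᵐᵒᵖ M
    exact smul_comm (op b) a m)

instance TA.instModuleRight [Module Aᵐᵒᵖ N] [SMulCommClass A Aᵐᵒᵖ N]
    [IsScalarTower K Aᵐᵒᵖ N] : Module Aᵐᵒᵖ (TA K A M N) :=
  TOver.moduleSnd K Aᵐᵒᵖ (fun b a n => smul_comm a b n)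

@[simp] theorem TA.smul_mk [Module A M] [SMulCommClass A Aᵐᵒᵖ M] [IsScalarTower K A M]
    (a : A) (m : M) (n : N) :
    a • TA.mk K A M N m n = TA.mk K A M N (a • m) n :=
  TOver.fstSmul_mk K A _ a m n

@[simp] theorem TA.op_smul_mk [Module Aᵐᵒᵖ N] [SMulCommClass A Aᵐᵒᵖ N]
    [IsScalarTower K Aᵐᵒᵖ N] (a : Aᵐᵒᵖ) (m : M) (n : N) :
    a • TA.mk K A M N m n = TA.mk K A M N m (a • n) :=
  TOver.sndSmul_mk K Aᵐᵒᵖ _ a m n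

@[simp] theorem TA.mk_smulK_left (k : K) (m : M) (n : N) :
    TA.mk K A M N (k • m) n = k • TA.mk K A M N m n := TOver.mk_smul_left K k m n

@[simp] theorem TA.mk_smulK_right (k : K) (m : M) (n : N) :
    TA.mk K A M N m (k • n) = k • TA.mk K A M N m n := TOver.mk_smul_right K k m n

@[simp] theorem TA.mk_zero_left (n : N) : TA.mk K A M N 0 n = 0 := TOver.mk_zero_left K n

@[simp] theorem TA.mk_zero_right (m : M) : TA.mk K A M N m 0 = 0 := TOver.mk_zero_right K m

@[simp] theorem TA.mk_add_left (m m' : M) (n : N) :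
    TA.mk K A M N (m + m') n = TA.mk K A M N m n + TA.mk K A M N m' n :=
  TOver.mk_add_left K m m' n

@[simp] theorem TA.mk_add_right (m : M) (n n' : N) :
    TA.mk K A M N m (n + n') = TA.mk K A M N m n + TA.mk K A M N m n' :=
  TOver.mk_add_right K m n n'

theorem TA.mk_rel (a : A) (m : M) (n : N) :
    TA.mk K A M N ((op a : Aᵐᵒᵖ) • m) n = TA.mk K A M N m (a • n) :=
  TOver.mk_rel K m a n

instance TA.instSMulCommClass [Module A M] [SMulCommClass A Aᵐᵒᵖ M] [IsScalarTower K A M]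
    [Module Aᵐᵒᵖ N] [SMulCommClass A Aᵐᵒᵖ N] [IsScalarTower K Aᵐᵒᵖ N] :
    SMulCommClass A Aᵐᵒᵖ (TA K A M N) where
  smul_comm a b x := by
    refine TOver.induction_on K x (by simp) (fun m n => ?_) (fun x y hx hy => ?_)
    · rw [TA.op_smul_mk, TA.smul_mk, TA.smul_mk, TA.op_smul_mk]
    · rw [smul_add, smul_add, hx, hy, smul_add, smul_add]

instance TA.instTowerLeft [Module A M] [SMulCommClass A Aᵐᵒᵖ M] [IsScalarTower K A M] :
    IsScalarTower K A (TA K A M N) where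
  smul_assoc k a x := by
    refine TOver.induction_on K x (by simp) (fun m n => ?_) (fun x y hx hy => ?_)
    · rw [TA.smul_mk, TA.smul_mk, smul_assoc]
      exact TA.mk_smulK_left K A M N k (a • m) n
    · rw [smul_add, smul_add, hx, hy, smul_add]

instance TA.instTowerRight [Module Aᵐᵒᵖ N] [SMulCommClass A Aᵐᵒᵖ N]
    [IsScalarTower K Aᵐᵒᵖ N] : IsScalarTower K Aᵐᵒᵖ (TA K A M N) where
  smul_assoc k a x := by
    refine TOver.induction_on K x (by simp) (fun m n => ?_) (fun x y hx hy => ?_)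
    · rw [TA.op_smul_mk, TA.op_smul_mk, smul_assoc]
      exact TA.mk_smulK_right K A M N k m (a • n)
    · rw [smul_add, smul_add, hx, hy, smul_add]

/-- Functoriality in the left variable. -/
def TA.mapLeft {M' : Type u} [AddCommGroup M'] [Module K M'] [Module Aᵐᵒᵖ M']
    (f : M →ₗ[K] M') (hf : ∀ (a : A) m, f (op a • m) = op a • f m) :
    TA K A M N →ₗ[K] TA K A M' N :=
  TOver.map K (rA A M) (lA A N) (rA A M') (lA A N) f LinearMap.id id
    (fun m a => hf a m) (fun _ _ => rfl)

@[simp] theorem TA.mapLeft_mk {M' : Type u} [AddCommGroup M'] [Module K M'] [Module Aᵐᵒᵖ M']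
    (f : M →ₗ[K] M') (hf : ∀ (a : A) m, f (op a • m) = op a • f m) (m : M) (n : N) :
    TA.mapLeft K A M N f hf (TA.mk K A M N m n) = TA.mk K A M' N (f m) n := by
  simp [TA.mapLeft]

/-- Functoriality in the right variable. -/
def TA.mapRight {N' : Type u} [AddCommGroup N'] [Module K N'] [Module A N']
    (g : N →ₗ[K] N') (hg : ∀ (a : A) n, g (a • n) = a • g n) :
    TA K A M N →ₗ[K] TA K A M N' :=
  TOver.map K (rA A M) (lA A N) (rA A M) (lA A N') LinearMap.id g id
    (fun _ _ => rfl) (fun a n => hg a n)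

@[simp] theorem TA.mapRight_mk {N' : Type u} [AddCommGroup N'] [Module K N'] [Module A N']
    (g : N →ₗ[K] N') (hg : ∀ (a : A) n, g (a • n) = a • g n) (m : M) (n : N) :
    TA.mapRight K A M N g hg (TA.mk K A M N m n) = TA.mk K A M N' m (g n) := by
  simp [TA.mapRight]

end TA

section Assoc

variable (A : Type u) [Ring A] [Algebra K A]
variable (M N P : Type u)
variable [AddCommGroup M] [Module K M] [Module Aᵐᵒᵖ M]
variable [AddCommGroup N] [Module K N] [Module A N] [Module Aᵐᵒᵖ N]
variable [SMulCommClass A Aᵐᵒᵖ N] [IsScalarTower K A N] [IsScalarTower K Aᵐᵒᵖ N]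
variable [AddCommGroup P] [Module K P] [Module A P]

/-- Auxiliary map for the associativity morphism. -/
def TA.assocAux : TA K A M N →ₗ[K] P →ₗ[K] TA K A M (TA K A N P) :=
  TOver.lift K
    (LinearMap.mk₂ K
      (fun m n => (TOver.mkHom K (rA A M) (lA A (TA K A N P)) m).comp
        (TOver.mkHom K (rA A N) (lA A P) n))
      (fun m m' n => by ext p; simp)
      (fun k m n => by ext p; simp)
      (fun m n n' => by ext p; simp)
      (fun k m n => by ext p; simp))
    (fun m a n => by
      ext p
      simp only [LinearMap.mk₂_apply, LinearMap.comp_apply, TOver.mkHom_apply]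
      rw [TOver.mk_rel]
      rw [show (lA A (TA K A N P)) a (TOver.mk K (rA A N) (lA A P) n p) =
        TA.mk K A N P (a • n) p from TA.smul_mk K A N P a n p])

@[simp] theorem TA.assocAux_mk (m : M) (n : N) (p : P) :
    TA.assocAux K A M N P (TA.mk K A M N m n) p = TA.mk K A M (TA K A N P) m (TA.mk K A N P n p) := by
  simp [TA.assocAux]

/-- The associativity comparison morphism `(M ⊗_A N) ⊗_A P → M ⊗_A (N ⊗_A P)`. -/
def TA.assoc : TA K A (TA K A M N) P →ₗ[K] TA K A M (TA K A N P) :=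
  TOver.lift K (TA.assocAux K A M N P) (fun x a p => by
    refine TOver.induction_on K x ?_ (fun m n => ?_) (fun x y hx hy => ?_)
    · show TA.assocAux K A M N P ((op a : Aᵐᵒᵖ) • (0 : TA K A M N)) p = _
      simp
    · show TA.assocAux K A M N P ((op a : Aᵐᵒᵖ) • TA.mk K A M N m n) p =
        TA.assocAux K A M N P (TA.mk K A M N m n) (a • p)
      rw [TA.op_smul_mk, TA.assocAux_mk, TA.assocAux_mk, TA.mk_rel]
    · show TA.assocAux K A M N P ((op a : Aᵐᵒᵖ) • (x + y)) p = _
      rw [smul_add, map_add]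
      simp only [LinearMap.add_apply]
      rw [hx, hy]
      show _ = TA.assocAux K A M N P (x + y) (a • p)
      rw [map_add]; rfl)

@[simp] theorem TA.assoc_mk (m : M) (n : N) (p : P) :
    TA.assoc K A M N P (TA.mk K A (TA K A M N) P (TA.mk K A M N m n) p) =
      TA.mk K A M (TA K A N P) m (TA.mk K A N P n p) := by
  simp [TA.assoc]

end Assoc

section Counit

variable (A : Type u) [Ring A] [Algebra K A]
variable (C₀ : Type u) [AddCommGroup C₀] [Module K C₀] [Module A C₀] [Module Aᵐᵒᵖ C₀]
variable [IsScalarTower K A C₀] [IsScalarTower K Aᵐᵒᵖ C₀]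

/-- The "counit" map `C ⊗_A M → M`, `c ⊗ m ↦ ε(c) • m`. -/
def TA.lcounit (Mₗ : Type u) [AddCommGroup Mₗ] [Module K Mₗ] [Module A Mₗ]
    [IsScalarTower K A Mₗ]
    (ε : C₀ →ₗ[K] A) (hε : ∀ (a : A) (c : C₀), ε (op a • c) = ε c * a) :
    TA K A C₀ Mₗ →ₗ[K] Mₗ :=
  TOver.lift K
    (LinearMap.mk₂ K (fun c m => ε c • m)
      (fun c c' m => by
        show ε (c + c') • m = ε c • m + ε c' • m
        rw [map_add, add_smul])
      (fun k c m => by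
        show ε (k • c) • m = k • (ε c • m)
        rw [map_smul]; exact smul_assoc k (ε c) m)
      (fun c m m' => smul_add _ _ _)
      (fun k c m => smul_comm _ _ _))
    (fun c a m => by
      show ε (op a • c) • m = ε c • (a • m)
      rw [hε, mul_smul])

@[simp] theorem TA.lcounit_mk (Mₗ : Type u) [AddCommGroup Mₗ] [Module K Mₗ] [Module A Mₗ]
    [IsScalarTower K A Mₗ]
    (ε : C₀ →ₗ[K] A) (hε : ∀ (a : A) (c : C₀), ε (op a • c) = ε c * a) (c : C₀) (m : Mₗ) :
    TA.lcounit K A C₀ Mₗ ε hε (TA.mk K A C₀ Mₗ c m) = ε c • m := by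
  simp [TA.lcounit]

/-- The "counit" map `M ⊗_A C → M`, `m ⊗ c ↦ m • ε(c)`. -/
def TA.rcounit (Mᵣ : Type u) [AddCommGroup Mᵣ] [Module K Mᵣ] [Module Aᵐᵒᵖ Mᵣ]
    [IsScalarTower K Aᵐᵒᵖ Mᵣ]
    (ε : C₀ →ₗ[K] A) (hε : ∀ (a : A) (c : C₀), ε (a • c) = a * ε c) :
    TA K A Mᵣ C₀ →ₗ[K] Mᵣ :=
  TOver.lift K
    (LinearMap.mk₂ K (fun m c => (op (ε c) : Aᵐᵒᵖ) • m)
      (fun m m' c => smul_add _ _ _)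
      (fun k m c => by
        haveI := SMulCommClass.symm K Aᵐᵒᵖ Mᵣ
        exact smul_comm _ _ _)
      (fun m c c' => by
        show (op (ε (c + c')) : Aᵐᵒᵖ) • m = (op (ε c) : Aᵐᵒᵖ) • m + (op (ε c') : Aᵐᵒᵖ) • m
        rw [map_add, op_add, add_smul])
      (fun k m c => by
        show (op (ε (k • c)) : Aᵐᵒᵖ) • m = k • ((op (ε c) : Aᵐᵒᵖ) • m)
        rw [map_smul, op_smul]; exact smul_assoc k (op (ε c)) m))
    (fun m a c => by
      show (op (ε c) : Aᵐᵒᵖ) • (op a : Aᵐᵒᵖ) • m = (op (ε (a • c)) : Aᵐᵒᵖ) • m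
      rw [hε, smul_smul, ← op_mul])

@[simp] theorem TA.rcounit_mk (Mᵣ : Type u) [AddCommGroup Mᵣ] [Module K Mᵣ] [Module Aᵐᵒᵖ Mᵣ]
    [IsScalarTower K Aᵐᵒᵖ Mᵣ]
    (ε : C₀ →ₗ[K] A) (hε : ∀ (a : A) (c : C₀), ε (a • c) = a * ε c) (m : Mᵣ) (c : C₀) :
    TA.rcounit K A C₀ Mᵣ ε hε (TA.mk K A Mᵣ C₀ m c) = (op (ε c) : Aᵐᵒᵖ) • m := by
  simp [TA.rcounit]

end Counit

/-! ### Naturality lemmas -/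

section Nat

variable (A : Type u) [Ring A] [Algebra K A]
variable {M M' M'' N N' P : Type u}
variable [AddCommGroup M] [Module K M] [Module Aᵐᵒᵖ M]
variable [AddCommGroup M'] [Module K M'] [Module Aᵐᵒᵖ M']
variable [AddCommGroup M''] [Module K M''] [Module Aᵐᵒᵖ M'']
variable [AddCommGroup N] [Module K N] [Module A N] [Module Aᵐᵒᵖ N]
variable [SMulCommClass A Aᵐᵒᵖ N] [IsScalarTower K A N] [IsScalarTower K Aᵐᵒᵖ N]
variable [AddCommGroup N'] [Module K N'] [Module A N']
variable [AddCommGroup P] [Module K P] [Module A P]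

theorem TA.mapLeft_rsmul (f : M →ₗ[K] M') (hf : ∀ (a : A) m, f ((op a : Aᵐᵒᵖ) • m) = (op a : Aᵐᵒᵖ) • f m)
    (a : Aᵐᵒᵖ) (x : TA K A M N) :
    TA.mapLeft K A M N f hf (a • x) = a • TA.mapLeft K A M N f hf x := by
  refine TOver.induction_on K x (by simp) (fun m n => ?_) (fun x y hx hy => ?_)
  · rw [TA.op_smul_mk, TA.mapLeft_mk, TA.mapLeft_mk, TA.op_smul_mk]
  · rw [smul_add, map_add, map_add, hx, hy, smul_add]

theorem TA.mapLeft_lsmul [Module A M] [SMulCommClass A Aᵐᵒᵖ M] [IsScalarTower K A M]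
    [Module A M'] [SMulCommClass A Aᵐᵒᵖ M'] [IsScalarTower K A M']
    (f : M →ₗ[K] M') (hf : ∀ (a : A) m, f ((op a : Aᵐᵒᵖ) • m) = (op a : Aᵐᵒᵖ) • f m)
    (hf' : ∀ (a : A) m, f (a • m) = a • f m)
    (a : A) (x : TA K A M N) :
    TA.mapLeft K A M N f hf (a • x) = a • TA.mapLeft K A M N f hf x := by
  refine TOver.induction_on K x (by simp) (fun m n => ?_) (fun x y hx hy => ?_)
  · rw [TA.smul_mk, TA.mapLeft_mk, TA.mapLeft_mk, TA.smul_mk, hf']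
  · rw [smul_add, map_add, map_add, hx, hy, smul_add]

theorem TA.mapRight_lsmul [Module A M] [SMulCommClass A Aᵐᵒᵖ M] [IsScalarTower K A M]
    (g : N →ₗ[K] N') (hg : ∀ (a : A) n, g (a • n) = a • g n) (a : A) (x : TA K A M N) :
    TA.mapRight K A M N g hg (a • x) = a • TA.mapRight K A M N g hg x := by
  refine TOver.induction_on K x (by simp) (fun m n => ?_) (fun x y hx hy => ?_)
  · rw [TA.smul_mk, TA.mapRight_mk, TA.mapRight_mk, TA.smul_mk]
  · rw [smul_add, map_add, map_add, hx, hy, smul_add]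

theorem TA.mapLeft_mapLeft (f : M →ₗ[K] M') (hf : ∀ (a : A) m, f ((op a : Aᵐᵒᵖ) • m) = (op a : Aᵐᵒᵖ) • f m)
    (g : M' →ₗ[K] M'') (hg : ∀ (a : A) m, g ((op a : Aᵐᵒᵖ) • m) = (op a : Aᵐᵒᵖ) • g m)
    (h : ∀ (a : A) m, (g.comp f) ((op a : Aᵐᵒᵖ) • m) = (op a : Aᵐᵒᵖ) • (g.comp f) m)
    (x : TA K A M N) :
    TA.mapLeft K A M' N g hg (TA.mapLeft K A M N f hf x) =
      TA.mapLeft K A M N (g.comp f) h x := by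
  refine TOver.induction_on K x (by simp) (fun m n => ?_) (fun x y hx hy => ?_)
  · simp
  · rw [map_add, map_add, map_add, hx, hy]

theorem TA.mapLeft_congr (f g : M →ₗ[K] M')
    (hf : ∀ (a : A) m, f ((op a : Aᵐᵒᵖ) • m) = (op a : Aᵐᵒᵖ) • f m)
    (hg : ∀ (a : A) m, g ((op a : Aᵐᵒᵖ) • m) = (op a : Aᵐᵒᵖ) • g m)
    (hfg : ∀ m, f m = g m) (x : TA K A M N) :
    TA.mapLeft K A M N f hf x = TA.mapLeft K A M N g hg x := by
  refine TOver.induction_on K x (by simp) (fun m n => ?_) (fun x y hx hy => ?_)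
  · rw [TA.mapLeft_mk, TA.mapLeft_mk, hfg]
  · rw [map_add, map_add, hx, hy]

theorem TA.mapLeft_mapRight_comm (f : M →ₗ[K] M')
    (hf : ∀ (a : A) m, f ((op a : Aᵐᵒᵖ) • m) = (op a : Aᵐᵒᵖ) • f m)
    (g : N →ₗ[K] N') (hg : ∀ (a : A) n, g (a • n) = a • g n) (x : TA K A M N) :
    TA.mapRight K A M' N g hg (TA.mapLeft K A M N f hf x) =
      TA.mapLeft K A M N' f hf (TA.mapRight K A M N g hg x) := by
  refine TOver.induction_on K x (by simp) (fun m n => ?_) (fun x y hx hy => ?_)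
  · simp
  · rw [map_add, map_add, map_add, map_add, hx, hy]

theorem TA.assoc_natL (f : M →ₗ[K] M'')
    (hf : ∀ (a : A) m, f ((op a : Aᵐᵒᵖ) • m) = (op a : Aᵐᵒᵖ) • f m)
    (h2 : ∀ (a : A) (y : TA K A M N), (TA.mapLeft K A M N f hf) ((op a : Aᵐᵒᵖ) • y) =
      (op a : Aᵐᵒᵖ) • TA.mapLeft K A M N f hf y)
    (x : TA K A (TA K A M N) P) :
    TA.assoc K A M'' N P (TA.mapLeft K A (TA K A M N) P (TA.mapLeft K A M N f hf) h2 x) =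
      TA.mapLeft K A M (TA K A N P) f hf (TA.assoc K A M N P x) := by
  refine TOver.induction_on K x (by simp) (fun y p => ?_) (fun x y hx hy => ?_)
  · rw [TA.mapLeft_mk]
    refine TOver.induction_on K y ?_ (fun m n => ?_) (fun y z hy hz => ?_)
    · rw [map_zero, TA.mk_zero_left, TOver.mk_zero_left, map_zero, map_zero, map_zero]
    · rw [TA.mapLeft_mk, TA.assoc_mk, TA.assoc_mk, TA.mapLeft_mk]
    · rw [map_add, TA.mk_add_left, TOver.mk_add_left, map_add, map_add, hy, hz, map_add]
  · rw [map_add, map_add, map_add, map_add, hx, hy]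

theorem TA.rcounit_mapLeft (C₀ : Type u) [AddCommGroup C₀] [Module K C₀] [Module A C₀]
    [Module Aᵐᵒᵖ C₀] [IsScalarTower K A C₀] [IsScalarTower K Aᵐᵒᵖ C₀]
    [IsScalarTower K Aᵐᵒᵖ M] [IsScalarTower K Aᵐᵒᵖ M']
    (ε : C₀ →ₗ[K] A) (hε : ∀ (a : A) (c : C₀), ε (a • c) = a * ε c)
    (f : M →ₗ[K] M') (hf : ∀ (a : A) m, f ((op a : Aᵐᵒᵖ) • m) = (op a : Aᵐᵒᵖ) • f m)
    (x : TA K A M C₀) :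
    TA.rcounit K A C₀ M' ε hε (TA.mapLeft K A M C₀ f hf x) =
      f (TA.rcounit K A C₀ M ε hε x) := by
  refine TOver.induction_on K x (by simp) (fun m c => ?_) (fun x y hx hy => ?_)
  · rw [TA.mapLeft_mk, TA.rcounit_mk, TA.rcounit_mk]
    exact (hf (ε c) m).symm
  · simp only [map_add, hx, hy]

end Nat

/-! ### Corings and comodules -/

section CoringDef

variable (A : Type u) [Ring A] [Algebra K A]
variable (C : Type u) [AddCommGroup C] [Module K C] [Module A C] [Module Aᵐᵒᵖ C]
variable [SMulCommClass A Aᵐᵒᵖ C] [IsScalarTower K A C] [IsScalarTower K Aᵐᵒᵖ C]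

/-- An `A`-coring structure on the `A`-bimodule `C`. -/
structure Coring where
  Δ : C →ₗ[K] TA K A C C
  ε : C →ₗ[K] A
  Δ_lsmul : ∀ (a : A) (c : C), Δ (a • c) = a • Δ c
  Δ_rsmul : ∀ (a : A) (c : C), Δ ((op a : Aᵐᵒᵖ) • c) = (op a : Aᵐᵒᵖ) • Δ c
  ε_lsmul : ∀ (a : A) (c : C), ε (a • c) = a * ε c
  ε_rsmul : ∀ (a : A) (c : C), ε ((op a : Aᵐᵒᵖ) • c) = ε c * a
  coassoc : ∀ c : C,
    TA.assoc K A C C C (TA.mapLeft K A C C Δ Δ_rsmul (Δ c)) =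
      TA.mapRight K A C C Δ Δ_lsmul (Δ c)
  counit_left : ∀ c : C, TA.lcounit K A C C ε ε_rsmul (Δ c) = c
  counit_right : ∀ c : C, TA.rcounit K A C C ε ε_lsmul (Δ c) = c

variable {C}

/-- A grouplike element of a coring. -/
def Coring.IsGrouplike (𝒞 : Coring K A C) (g : C) : Prop :=
  𝒞.Δ g = TA.mk K A C C g g ∧ 𝒞.ε g = 1

/-- A right comodule structure over the coring `𝒞` on the right `A`-module `M`. -/
structure Comod (𝒞 : Coring K A C) (M : Type u) [AddCommGroup M] [Module K M]
    [Module Aᵐᵒᵖ M] [IsScalarTower K Aᵐᵒᵖ M] where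
  ρ : M →ₗ[K] TA K A M C
  ρ_rsmul : ∀ (a : A) (m : M), ρ ((op a : Aᵐᵒᵖ) • m) = (op a : Aᵐᵒᵖ) • ρ m
  coassoc : ∀ m : M,
    TA.assoc K A M C C (TA.mapLeft K A M C ρ ρ_rsmul (ρ m)) =
      TA.mapRight K A M C 𝒞.Δ 𝒞.Δ_lsmul (ρ m)
  counit : ∀ m : M, TA.rcounit K A C M 𝒞.ε 𝒞.ε_lsmul (ρ m) = m

variable {𝒞 : Coring K A C}
variable {M N L : Type u}
variable [AddCommGroup M] [Module K M] [Module Aᵐᵒᵖ M] [IsScalarTower K Aᵐᵒᵖ M]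
variable [AddCommGroup N] [Module K N] [Module Aᵐᵒᵖ N] [IsScalarTower K Aᵐᵒᵖ N]
variable [AddCommGroup L] [Module K L] [Module Aᵐᵒᵖ L] [IsScalarTower K Aᵐᵒᵖ L]

/-- Morphisms of right comodules: right `A`-linear maps compatible with the coactions. -/
structure ComodHom (ρM : Comod K A 𝒞 M) (ρN : Comod K A 𝒞 N) where
  f : M →ₗ[K] N
  f_rsmul : ∀ (a : A) (m : M), f ((op a : Aᵐᵒᵖ) • m) = (op a : Aᵐᵒᵖ) • f m
  colin : ∀ m : M, ρN.ρ (f m) = TA.mapLeft K A M C f f_rsmul (ρM.ρ m)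

theorem TA.mapLeft_id {M₀ N₀ : Type u} [AddCommGroup M₀] [Module K M₀] [Module Aᵐᵒᵖ M₀]
    [AddCommGroup N₀] [Module K N₀] [Module A N₀]
    (h : ∀ (a : A) (m : M₀), LinearMap.id (R := K) ((op a : Aᵐᵒᵖ) • m) = (op a : Aᵐᵒᵖ) • LinearMap.id (R := K) m)
    (x : TA K A M₀ N₀) : TA.mapLeft K A M₀ N₀ LinearMap.id h x = x := by
  refine TOver.induction_on K x (map_zero _) (fun m n => ?_) (fun x y hx hy => ?_)
  · rw [TA.mapLeft_mk]; rfl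
  · rw [map_add, hx, hy]

/-- The identity comodule morphism. -/
def ComodHom.id (ρM : Comod K A 𝒞 M) : ComodHom K A ρM ρM where
  f := LinearMap.id
  f_rsmul := fun _ _ => rfl
  colin := fun m => (TA.mapLeft_id K A (fun _ _ => rfl) (ρM.ρ m)).symm

/-- Composition of comodule morphisms. -/
def ComodHom.comp {ρM : Comod K A 𝒞 M} {ρN : Comod K A 𝒞 N} {ρL : Comod K A 𝒞 L}
    (g : ComodHom K A ρN ρL) (h : ComodHom K A ρM ρN) : ComodHom K A ρM ρL where
  f := g.f.comp h.f
  f_rsmul := fun a m => by simp [h.f_rsmul, g.f_rsmul]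
  colin := fun m => by
    simp only [LinearMap.comp_apply]
    rw [g.colin, h.colin]
    exact TA.mapLeft_mapLeft K A h.f h.f_rsmul g.f g.f_rsmul _ (ρM.ρ m)

/-- A comodule `S₀` is a generator of the category of comodules if the functor
`Hom(S₀, -)` is faithful. -/
def Comod.IsGenerator {S₀ : Type u} [AddCommGroup S₀] [Module K S₀] [Module Aᵐᵒᵖ S₀]
    [IsScalarTower K Aᵐᵒᵖ S₀] (ρS : Comod K A 𝒞 S₀) : Prop :=
  ∀ (M' N' : Type u) [AddCommGroup M'] [Module K M'] [Module Aᵐᵒᵖ M'] [IsScalarTower K Aᵐᵒᵖ M']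
    [AddCommGroup N'] [Module K N'] [Module Aᵐᵒᵖ N'] [IsScalarTower K Aᵐᵒᵖ N']
    (ρM : Comod K A 𝒞 M') (ρN : Comod K A 𝒞 N') (φ : ComodHom K A ρM ρN),
    φ.f ≠ 0 → ∃ ψ : ComodHom K A ρS ρM, φ.f.comp ψ.f ≠ 0

/-- A comodule is projective if it has the lifting property against surjective
comodule morphisms. -/
def Comod.IsProjective {S₀ : Type u} [AddCommGroup S₀] [Module K S₀] [Module Aᵐᵒᵖ S₀]
    [IsScalarTower K Aᵐᵒᵖ S₀] (ρS : Comod K A 𝒞 S₀) : Prop :=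
  ∀ (M' N' : Type u) [AddCommGroup M'] [Module K M'] [Module Aᵐᵒᵖ M'] [IsScalarTower K Aᵐᵒᵖ M']
    [AddCommGroup N'] [Module K N'] [Module Aᵐᵒᵖ N'] [IsScalarTower K Aᵐᵒᵖ N']
    (ρM : Comod K A 𝒞 M') (ρN : Comod K A 𝒞 N') (g : ComodHom K A ρM ρN)
    (φ : ComodHom K A ρS ρN), Function.Surjective g.f →
      ∃ ψ : ComodHom K A ρS ρM, g.f.comp ψ.f = φ.f

end CoringDef

/-! ### Flatness -/

section Flat

variable (A : Type u) [Ring A] [Algebra K A]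

/-- `C` is flat as a left `A`-module: tensoring right `A`-modules with `C` over `A`
preserves injectivity. -/
def LeftFlat (C : Type u) [AddCommGroup C] [Module K C] [Module A C] : Prop :=
  ∀ (X Y : Type u) [AddCommGroup X] [Module K X] [Module Aᵐᵒᵖ X] [IsScalarTower K Aᵐᵒᵖ X]
    [AddCommGroup Y] [Module K Y] [Module Aᵐᵒᵖ Y] [IsScalarTower K Aᵐᵒᵖ Y]
    (f : X →ₗ[K] Y) (hf : ∀ (a : A) m, f ((op a : Aᵐᵒᵖ) • m) = (op a : Aᵐᵒᵖ) • f m),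
    Function.Injective f → Function.Injective (TA.mapLeft K A X C f hf)

end Flat

/-! ### K-linear functors from a small K-linear category to right A-modules -/

section MFunctorDef

open CategoryTheory

variable (A : Type u) [Ring A] [Algebra K A]
variable (𝒜 : Type u) [CategoryTheory.SmallCategory 𝒜] [CategoryTheory.Preadditive 𝒜]
  [CategoryTheory.Linear K 𝒜]

/-- A `K`-linear functor from the small `K`-linear category `𝒜` to the category of
right `A`-modules. -/
structure MFunctor where
  obj : 𝒜 → Type u
  [acg : ∀ P, AddCommGroup (obj P)]
  [modK : ∀ P, Module K (obj P)]
  [modA : ∀ P, Module Aᵐᵒᵖ (obj P)]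
  [tower : ∀ P, IsScalarTower K Aᵐᵒᵖ (obj P)]
  map : ∀ {P Q : 𝒜}, (P ⟶ Q) → (obj P →ₗ[Aᵐᵒᵖ] obj Q)
  map_id : ∀ P : 𝒜, map (𝟙 P) = LinearMap.id
  map_comp : ∀ {P Q R : 𝒜} (f : P ⟶ Q) (g : Q ⟶ R), map (f ≫ g) = (map g).comp (map f)
  map_add : ∀ {P Q : 𝒜} (f g : P ⟶ Q), map (f + g) = map f + map g
  map_smul : ∀ {P Q : 𝒜} (k : K) (f : P ⟶ Q), map (k • f) = k • map f

attribute [instance] MFunctor.acg MFunctor.modK MFunctor.modA MFunctor.tower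

end MFunctorDef

/-! ### The coproduct of comatrix corings attached to `ω : 𝒜 → add(A_A)` -/

section Comatrix

open CategoryTheory

variable (A : Type u) [Ring A] [Algebra K A]
variable (𝒜 : Type u) [SmallCategory 𝒜] [Preadditive 𝒜] [CategoryTheory.Linear K 𝒜]
variable (ω : MFunctor K A 𝒜)

/-- The right dual `P* = Hom_A(P, A)` of the image of `P` under `ω`, as a left `A`-module. -/
abbrev MDual (P : 𝒜) : Type u := ω.obj P →ₗ[Aᵐᵒᵖ] A

instance (P : 𝒜) : SMulCommClass Aᵐᵒᵖ K (ω.obj P) := SMulCommClass.symm K Aᵐᵒᵖ _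

instance (X : Type u) [AddCommGroup X] [Module Aᵐᵒᵖ X] :
    SMulCommClass A K (X →ₗ[Aᵐᵒᵖ] A) :=
  ⟨fun a k φ => LinearMap.ext fun x => (smul_comm k a (φ x)).symm⟩

/-- Right action of `T_{PQ} = Hom_𝒜(P,Q)` on duals, `φ ⋅ t = φ ∘ ω(t)`. -/
def duAct (Q : 𝒜) (P : 𝒜) : MDual K A 𝒜 ω Q → (P ⟶ Q) → MDual K A 𝒜 ω P :=
  fun φ t => φ.comp (ω.map t)

/-- Left action of `T_{PQ} = Hom_𝒜(P,Q)` on the modules, `t ⋅ p = ω(t)(p)`. -/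
def obAct (P : 𝒜) (Q : 𝒜) : (P ⟶ Q) → ω.obj P → ω.obj Q :=
  fun t p => ω.map t p

/-- The comatrix coring component `P* ⊗_{T_P} P`. -/
abbrev Comatrix (P : 𝒜) : Type u :=
  TOver K (duAct K A 𝒜 ω P P) (obAct K A 𝒜 ω P P)

/-- The class of `φ ⊗_{T_P} p` in the comatrix component. -/
abbrev Comatrix.mk (P : 𝒜) (φ : MDual K A 𝒜 ω P) (p : ω.obj P) : Comatrix K A 𝒜 ω P :=
  TOver.mk K (duAct K A 𝒜 ω P P) (obAct K A 𝒜 ω P P) φ p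

instance (P : 𝒜) : Module A (Comatrix K A 𝒜 ω P) :=
  TOver.moduleFst K A (fun a φ t => LinearMap.ext fun p => rfl)

instance (P : 𝒜) : Module Aᵐᵒᵖ (Comatrix K A 𝒜 ω P) :=
  TOver.moduleSnd K Aᵐᵒᵖ (fun b t p => map_smul (ω.map t) b p)

@[simp] theorem Comatrix.smul_mk (P : 𝒜) (a : A) (φ : MDual K A 𝒜 ω P) (p : ω.obj P) :
    a • Comatrix.mk K A 𝒜 ω P φ p = Comatrix.mk K A 𝒜 ω P (a • φ) p :=
  TOver.fstSmul_mk K A _ a φ p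

@[simp] theorem Comatrix.opsmul_mk (P : 𝒜) (b : Aᵐᵒᵖ) (φ : MDual K A 𝒜 ω P) (p : ω.obj P) :
    b • Comatrix.mk K A 𝒜 ω P φ p = Comatrix.mk K A 𝒜 ω P φ (b • p) :=
  TOver.sndSmul_mk K Aᵐᵒᵖ _ b φ p

@[simp] theorem Comatrix.mk_ksmul_left (P : 𝒜) (k : K) (φ : MDual K A 𝒜 ω P) (p : ω.obj P) :
    Comatrix.mk K A 𝒜 ω P (k • φ) p = k • Comatrix.mk K A 𝒜 ω P φ p :=
  TOver.mk_smul_left K k φ p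

@[simp] theorem Comatrix.mk_ksmul_right (P : 𝒜) (k : K) (φ : MDual K A 𝒜 ω P) (p : ω.obj P) :
    Comatrix.mk K A 𝒜 ω P φ (k • p) = k • Comatrix.mk K A 𝒜 ω P φ p :=
  TOver.mk_smul_right K k φ p

instance (P : 𝒜) : SMulCommClass A Aᵐᵒᵖ (Comatrix K A 𝒜 ω P) := by
  refine ⟨fun a b x => ?_⟩
  refine TOver.induction_on K x (by simp) (fun φ p => ?_) (fun x y hx hy => ?_)
  · rw [Comatrix.opsmul_mk, Comatrix.smul_mk, Comatrix.smul_mk, Comatrix.opsmul_mk]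
  · rw [smul_add, smul_add, hx, hy, smul_add, smul_add]

instance (P : 𝒜) : IsScalarTower K A (Comatrix K A 𝒜 ω P) := by
  refine ⟨fun k a x => ?_⟩
  refine TOver.induction_on K x (by simp) (fun φ p => ?_) (fun x y hx hy => ?_)
  · rw [Comatrix.smul_mk, Comatrix.smul_mk, smul_assoc]
    exact Comatrix.mk_ksmul_left K A 𝒜 ω P k (a • φ) p
  · rw [smul_add, smul_add, hx, hy, smul_add]

instance (P : 𝒜) : IsScalarTower K Aᵐᵒᵖ (Comatrix K A 𝒜 ω P) := by
  refine ⟨fun k b x => ?_⟩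
  refine TOver.induction_on K x (by simp) (fun φ p => ?_) (fun x y hx hy => ?_)
  · rw [Comatrix.opsmul_mk, Comatrix.opsmul_mk, smul_assoc]
    exact Comatrix.mk_ksmul_right K A 𝒜 ω P k φ (b • p)
  · rw [smul_add, smul_add, hx, hy, smul_add]

instance (P : 𝒜) : AddCommGroup (Comatrix K A 𝒜 ω P) := inferInstance

/-- `𝔓(𝒜) = ⊕_{P ∈ 𝒜} P* ⊗_{T_P} P`, the coproduct of the comatrix corings. -/
abbrev PCor : Type u := ⨁ (P : 𝒜), Comatrix K A 𝒜 ω P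

variable [DecidableEq 𝒜]

/-- The canonical inclusion of a comatrix component into `𝔓(𝒜)`. -/
abbrev PCor.of (P : 𝒜) (x : Comatrix K A 𝒜 ω P) : PCor K A 𝒜 ω :=
  DirectSum.lof K 𝒜 (fun P => Comatrix K A 𝒜 ω P) P x

/-- The coideal `𝔍` of `𝔓(𝒜)`, generated by the elements
`φ ⊗_{T_Q} tp − φt ⊗_{T_P} p`. -/
def JId : Submodule K (PCor K A 𝒜 ω) :=
  Submodule.span K {x | ∃ (P Q : 𝒜) (t : P ⟶ Q) (φ : MDual K A 𝒜 ω Q) (p : ω.obj P),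
    x = PCor.of K A 𝒜 ω Q (Comatrix.mk K A 𝒜 ω Q φ (ω.map t p)) -
      PCor.of K A 𝒜 ω P (Comatrix.mk K A 𝒜 ω P (φ.comp (ω.map t)) p)}

end Comatrix

/-! ### Auxiliary lemmas for Statement 4 -/

section Aux4

open CategoryTheory

variable {K : Type u} [CommRing K] {A : Type u} [Ring A] [Algebra K A]

theorem TOver.mk_sum_left' {M N R : Type u} [AddCommGroup M] [Module K M]
    [AddCommGroup N] [Module K N] {ra : M → R → M} {la : R → N → N}
    {ι : Type*} (s : Finset ι) (m : ι → M) (n : N) :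
    TOver.mk K ra la (∑ i ∈ s, m i) n = ∑ i ∈ s, TOver.mk K ra la (m i) n :=
  map_sum ((TOver.mkHom K ra la).flip n) m s

theorem TOver.mk_sum_right' {M N R : Type u} [AddCommGroup M] [Module K M]
    [AddCommGroup N] [Module K N] {ra : M → R → M} {la : R → N → N}
    {ι : Type*} (s : Finset ι) (m : M) (n : ι → N) :
    TOver.mk K ra la m (∑ i ∈ s, n i) = ∑ i ∈ s, TOver.mk K ra la m (n i) :=
  map_sum (TOver.mkHom K ra la m) n s

theorem TA.mk_sum_left {M N : Type u} [AddCommGroup M] [Module K M] [Module Aᵐᵒᵖ M]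
    [AddCommGroup N] [Module K N] [Module A N] {ι : Type*} (s : Finset ι)
    (m : ι → M) (n : N) :
    TA.mk K A M N (∑ i ∈ s, m i) n = ∑ i ∈ s, TA.mk K A M N (m i) n :=
  map_sum ((TOver.mkHom K (rA A M) (lA A N)).flip n) m s

theorem TA.mk_sum_right {M N : Type u} [AddCommGroup M] [Module K M] [Module Aᵐᵒᵖ M]
    [AddCommGroup N] [Module K N] [Module A N] {ι : Type*} (s : Finset ι)
    (m : M) (n : ι → N) :
    TA.mk K A M N m (∑ i ∈ s, n i) = ∑ i ∈ s, TA.mk K A M N m (n i) :=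
  map_sum (TOver.mkHom K (rA A M) (lA A N) m) n s

variable {𝒜 : Type u} [SmallCategory 𝒜] [Preadditive 𝒜] [CategoryTheory.Linear K 𝒜]
variable [DecidableEq 𝒜] {ω : MFunctor K A 𝒜}

theorem Comatrix.mk_sum_left (P : 𝒜) {ι : Type*} (s : Finset ι)
    (φ : ι → MDual K A 𝒜 ω P) (p : ω.obj P) :
    Comatrix.mk K A 𝒜 ω P (∑ i ∈ s, φ i) p = ∑ i ∈ s, Comatrix.mk K A 𝒜 ω P (φ i) p :=
  map_sum ((TOver.mkHom K (duAct K A 𝒜 ω P P) (obAct K A 𝒜 ω P P)).flip p) φ s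

theorem PCor.of_opsmul (P : 𝒜) (b : Aᵐᵒᵖ) (x : Comatrix K A 𝒜 ω P) :
    PCor.of K A 𝒜 ω P (b • x) = b • PCor.of K A 𝒜 ω P x := by
  rw [PCor.of, DirectSum.lof_eq_of, DirectSum.of_smul, ← DirectSum.lof_eq_of K]

theorem PCor.of_lsmul (P : 𝒜) (a : A) (x : Comatrix K A 𝒜 ω P) :
    PCor.of K A 𝒜 ω P (a • x) = a • PCor.of K A 𝒜 ω P x := by
  rw [PCor.of, DirectSum.lof_eq_of, DirectSum.of_smul, ← DirectSum.lof_eq_of K]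

/-- The `K`-linear version of `ω.map t`. -/
def MFunctor.mapK {P Q : 𝒜} (ω : MFunctor K A 𝒜) (t : P ⟶ Q) : ω.obj P →ₗ[K] ω.obj Q where
  toFun := ω.map t
  map_add' x y := _root_.map_add (ω.map t) x y
  map_smul' k p := show ω.map t (k • p) = k • ω.map t p by
    rw [← one_smul Aᵐᵒᵖ p, ← smul_assoc, LinearMap.map_smul_of_tower, smul_assoc, one_smul, one_smul]

@[simp] theorem MFunctor.mapK_apply {P Q : 𝒜} (ω : MFunctor K A 𝒜) (t : P ⟶ Q) (p : ω.obj P) :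
    ω.mapK t p = ω.map t p := rfl

/-- Dual-basis identity for the dual of a morphism. -/
theorem dual_comp_eq {P Q : 𝒜} (t : P ⟶ Q) {nP : ℕ}
    (eP : Fin nP → ω.obj P) (e'P : Fin nP → MDual K A 𝒜 ω P)
    (heP : ∀ p : ω.obj P, ∑ i, (op (e'P i p) : Aᵐᵒᵖ) • eP i = p)
    (ψ : MDual K A 𝒜 ω Q) :
    ψ.comp (ω.map t) = ∑ i, (ψ (ω.map t (eP i))) • e'P i := by
  ext p
  rw [LinearMap.comp_apply]
  conv_lhs => rw [← heP p]
  rw [map_sum, map_sum]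
  simp only [LinearMap.sum_apply, LinearMap.smul_apply, map_smul, op_smul_eq_mul,
    smul_eq_mul]

end Aux4

/-! ## STATEMENT 4 -/

section Statement4

open CategoryTheory

variable (K : Type u) [CommRing K] (A : Type u) [Ring A] [Algebra K A]
variable (𝒜 : Type u) [SmallCategory 𝒜] [Preadditive 𝒜] [CategoryTheory.Linear K 𝒜]
variable [DecidableEq 𝒜] (ω : MFunctor K A 𝒜)

/-- The quotient `ℜ(𝒜) = 𝔓(𝒜)/𝔍`. -/
abbrev RCor : Type u := PCor K A 𝒜 ω ⧸ JId K A 𝒜 ω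

/-- The canonical projection `π : 𝔓(𝒜) → ℜ(𝒜)`. -/
abbrev RCor.π : PCor K A 𝒜 ω →ₗ[K] RCor K A 𝒜 ω := (JId K A 𝒜 ω).mkQ

/-- The coaction map for the comodule structure on `ω.obj P`. -/
def coactMap [Module A (RCor K A 𝒜 ω)] (n : 𝒜 → ℕ)
    (e : ∀ P : 𝒜, Fin (n P) → ω.obj P)
    (e' : ∀ P : 𝒜, Fin (n P) → MDual K A 𝒜 ω P) (P : 𝒜) :
    ω.obj P →ₗ[K] TA K A (ω.obj P) (RCor K A 𝒜 ω) :=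
  ∑ i, (TOver.mkHom K (rA A (ω.obj P)) (lA A (RCor K A 𝒜 ω)) (e P i)).comp
      ((RCor.π K A 𝒜 ω).comp ((DirectSum.lof K 𝒜 (fun Q => Comatrix K A 𝒜 ω Q) P).comp
        (TOver.mkHom K (duAct K A 𝒜 ω P P) (obAct K A 𝒜 ω P P) (e' P i))))

@[simp] theorem coactMap_apply [Module A (RCor K A 𝒜 ω)] (n : 𝒜 → ℕ)
    (e : ∀ P : 𝒜, Fin (n P) → ω.obj P)
    (e' : ∀ P : 𝒜, Fin (n P) → MDual K A 𝒜 ω P) (P : 𝒜) (p : ω.obj P) :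
    coactMap K A 𝒜 ω n e e' P p = ∑ i, TA.mk K A (ω.obj P) (RCor K A 𝒜 ω) (e P i)
      (RCor.π K A 𝒜 ω (PCor.of K A 𝒜 ω P (Comatrix.mk K A 𝒜 ω P (e' P i) p))) := by
  simp [coactMap, LinearMap.sum_apply]


set_option maxHeartbeats 1000000

/-- Proposition 3.2: there is a functor `ℜ(ω) : 𝒜 → M^{ℜ(𝒜)}` lifting `ω`:
every `P ∈ 𝒜` carries a right `ℜ(𝒜)`-comodule structure with the stated coaction,
and every morphism `λ` of `𝒜` induces the `ℜ(𝒜)`-colinear map `ω(λ)`. -/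
theorem statement4
    (hfin : ∀ P : 𝒜, Module.Finite Aᵐᵒᵖ (ω.obj P))
    (hproj : ∀ P : 𝒜, Module.Projective Aᵐᵒᵖ (ω.obj P))
    (n : 𝒜 → ℕ) (e : ∀ P : 𝒜, Fin (n P) → ω.obj P)
    (e' : ∀ P : 𝒜, Fin (n P) → MDual K A 𝒜 ω P)
    (he : ∀ (P : 𝒜) (p : ω.obj P), ∑ i, (op (e' P i p) : Aᵐᵒᵖ) • e P i = p)
    -- the `A`-bimodule structure of the factor coring `ℜ(𝒜)`
    [Module A (RCor K A 𝒜 ω)] [Module Aᵐᵒᵖ (RCor K A 𝒜 ω)]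
    [SMulCommClass A Aᵐᵒᵖ (RCor K A 𝒜 ω)] [IsScalarTower K A (RCor K A 𝒜 ω)]
    [IsScalarTower K Aᵐᵒᵖ (RCor K A 𝒜 ω)]
    (hπl : ∀ (a : A) (x : PCor K A 𝒜 ω), RCor.π K A 𝒜 ω (a • x) = a • RCor.π K A 𝒜 ω x)
    (hπr : ∀ (a : A) (x : PCor K A 𝒜 ω),
      RCor.π K A 𝒜 ω ((op a : Aᵐᵒᵖ) • x) = (op a : Aᵐᵒᵖ) • RCor.π K A 𝒜 ω x)
    -- the factor coring structure `ℜ(𝒜) = 𝔓(𝒜)/𝔍`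
    (ℛ : Coring K A (RCor K A 𝒜 ω))
    (hΔ : ∀ (P : 𝒜) (φ : MDual K A 𝒜 ω P) (p : ω.obj P),
      ℛ.Δ (RCor.π K A 𝒜 ω (PCor.of K A 𝒜 ω P (Comatrix.mk K A 𝒜 ω P φ p))) =
        ∑ i, TA.mk K A (RCor K A 𝒜 ω) (RCor K A 𝒜 ω)
          (RCor.π K A 𝒜 ω (PCor.of K A 𝒜 ω P (Comatrix.mk K A 𝒜 ω P φ (e P i))))
          (RCor.π K A 𝒜 ω (PCor.of K A 𝒜 ω P (Comatrix.mk K A 𝒜 ω P (e' P i) p))))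
    (hε : ∀ (P : 𝒜) (φ : MDual K A 𝒜 ω P) (p : ω.obj P),
      ℛ.ε (RCor.π K A 𝒜 ω (PCor.of K A 𝒜 ω P (Comatrix.mk K A 𝒜 ω P φ p))) = φ p) :
    (∀ P : 𝒜, ∃ ρP : Comod K A ℛ (ω.obj P), ∀ p : ω.obj P,
      ρP.ρ p = ∑ i, TA.mk K A (ω.obj P) (RCor K A 𝒜 ω) (e P i)
        (RCor.π K A 𝒜 ω (PCor.of K A 𝒜 ω P (Comatrix.mk K A 𝒜 ω P (e' P i) p)))) ∧
    (∀ (P Q : 𝒜) (t : P ⟶ Q) (ρP : Comod K A ℛ (ω.obj P)) (ρQ : Comod K A ℛ (ω.obj Q)),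
      (∀ p : ω.obj P, ρP.ρ p = ∑ i, TA.mk K A (ω.obj P) (RCor K A 𝒜 ω) (e P i)
        (RCor.π K A 𝒜 ω (PCor.of K A 𝒜 ω P (Comatrix.mk K A 𝒜 ω P (e' P i) p)))) →
      (∀ q : ω.obj Q, ρQ.ρ q = ∑ i, TA.mk K A (ω.obj Q) (RCor K A 𝒜 ω) (e Q i)
        (RCor.π K A 𝒜 ω (PCor.of K A 𝒜 ω Q (Comatrix.mk K A 𝒜 ω Q (e' Q i) q)))) →
      ∃ h : ComodHom K A ρP ρQ, ∀ p : ω.obj P, h.f p = ω.map t p) := by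
  classical
  have hcf : ∀ (P : 𝒜) (a : A) (φ : MDual K A 𝒜 ω P) (p : ω.obj P),
      RCor.π K A 𝒜 ω (PCor.of K A 𝒜 ω P (Comatrix.mk K A 𝒜 ω P (a • φ) p)) =
        a • RCor.π K A 𝒜 ω (PCor.of K A 𝒜 ω P (Comatrix.mk K A 𝒜 ω P φ p)) := by
    intro P a φ p
    rw [← Comatrix.smul_mk, PCor.of_lsmul, hπl]
  have hcr : ∀ (P : 𝒜) (a : A) (φ : MDual K A 𝒜 ω P) (p : ω.obj P),
      RCor.π K A 𝒜 ω (PCor.of K A 𝒜 ω P (Comatrix.mk K A 𝒜 ω P φ ((op a : Aᵐᵒᵖ) • p))) =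
        (op a : Aᵐᵒᵖ) • RCor.π K A 𝒜 ω (PCor.of K A 𝒜 ω P (Comatrix.mk K A 𝒜 ω P φ p)) := by
    intro P a φ p
    rw [← Comatrix.opsmul_mk, PCor.of_opsmul, hπr]
  have hJrel : ∀ (P Q : 𝒜) (t : P ⟶ Q) (φ : MDual K A 𝒜 ω Q) (p : ω.obj P),
      RCor.π K A 𝒜 ω (PCor.of K A 𝒜 ω Q (Comatrix.mk K A 𝒜 ω Q φ (ω.map t p))) =
        RCor.π K A 𝒜 ω (PCor.of K A 𝒜 ω P (Comatrix.mk K A 𝒜 ω P (φ.comp (ω.map t)) p)) := by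
    intro P Q t φ p
    exact (Submodule.Quotient.eq _).2 (Submodule.subset_span ⟨P, Q, t, φ, p, rfl⟩)
  have hρrs : ∀ (P : 𝒜) (a : A) (p : ω.obj P),
      coactMap K A 𝒜 ω n e e' P ((op a : Aᵐᵒᵖ) • p) =
        (op a : Aᵐᵒᵖ) • coactMap K A 𝒜 ω n e e' P p := by
    intro P a p
    rw [coactMap_apply, coactMap_apply, Finset.smul_sum]
    refine Finset.sum_congr rfl fun i _ => ?_
    rw [hcr P a (e' P i) p, TA.op_smul_mk]
  constructor
  · intro P
    refine ⟨⟨coactMap K A 𝒜 ω n e e' P, hρrs P, ?_, ?_⟩,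
      fun p => coactMap_apply K A 𝒜 ω n e e' P p⟩
    · intro p
      simp only [coactMap_apply, map_sum, TA.mapLeft_mk, TA.mk_sum_left,
        TA.assoc_mk, TA.mapRight_mk, hΔ, TA.mk_sum_right]
      exact Finset.sum_comm
    · intro p
      rw [coactMap_apply, map_sum]
      simp only [TA.rcounit_mk, hε]
      exact he P p
  · intro P Q t ρP ρQ hP hQ
    have hfr : ∀ (a : A) (p : ω.obj P),
        ω.mapK t ((op a : Aᵐᵒᵖ) • p) = (op a : Aᵐᵒᵖ) • ω.mapK t p :=
      fun a p => map_smul (ω.map t) (op a) p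
    refine ⟨⟨ω.mapK t, hfr, ?_⟩, fun p => rfl⟩
    intro p
    show ρQ.ρ (ω.map t p) = _
    have hR : ∀ i : Fin (n P),
        TA.mk K A (ω.obj Q) (RCor K A 𝒜 ω) (ω.map t (e P i))
          (RCor.π K A 𝒜 ω (PCor.of K A 𝒜 ω P (Comatrix.mk K A 𝒜 ω P (e' P i) p))) =
        ∑ j, TA.mk K A (ω.obj Q) (RCor K A 𝒜 ω) (e Q j)
          ((e' Q j (ω.map t (e P i))) •
            RCor.π K A 𝒜 ω (PCor.of K A 𝒜 ω P (Comatrix.mk K A 𝒜 ω P (e' P i) p))) := by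
      intro i
      set C := RCor.π K A 𝒜 ω (PCor.of K A 𝒜 ω P (Comatrix.mk K A 𝒜 ω P (e' P i) p)) with hC
      calc TA.mk K A (ω.obj Q) (RCor K A 𝒜 ω) (ω.map t (e P i)) C
          = TA.mk K A (ω.obj Q) (RCor K A 𝒜 ω)
              (∑ j, (op (e' Q j (ω.map t (e P i))) : Aᵐᵒᵖ) • e Q j) C := by
            rw [he Q]
        _ = ∑ j, TA.mk K A (ω.obj Q) (RCor K A 𝒜 ω)
              ((op (e' Q j (ω.map t (e P i))) : Aᵐᵒᵖ) • e Q j) C :=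
            TA.mk_sum_left _ _ _
        _ = ∑ j, TA.mk K A (ω.obj Q) (RCor K A 𝒜 ω) (e Q j)
              ((e' Q j (ω.map t (e P i))) • C) :=
            Finset.sum_congr rfl fun j _ =>
              TA.mk_rel K A (ω.obj Q) (RCor K A 𝒜 ω) (e' Q j (ω.map t (e P i))) (e Q j) C
    rw [hQ (ω.map t p), hP p, map_sum]
    simp only [TA.mapLeft_mk, MFunctor.mapK_apply, hJrel,
      dual_comp_eq t (e P) (e' P) (he P), Comatrix.mk_sum_left, map_sum,
      TA.mk_sum_right, hcf]
    exact Eq.trans Finset.sum_comm (Finset.sum_congr rfl fun i _ => (hR i).symm)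


end Statement4

end

end ICC
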